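/- Let Γ be an irreducible cocompact lattice in PSL(2,ℝ)^d derived from a maximal order R in a quaternion algebra over a totally real field L of degree n ≥ d (ramified at all real places beyond the first d). Then for the trace set Tr(Γ) = {(tr γ₁, ..., tr γ_d) : γ ∈ Γ} ⊂ ℝ^d and any x ∈ ℝ^d and T₁,...,T_d > 0: #{t ∈ Tr(Γ) : |t_j - x_j| ≤ T_j for all j} ≤ 1 + 2^{2n-d} T₁⋯T_d. -/

import Mathlib

open scoped Quaternion

/-!
The reduced trace `τ = 2 re α` of a norm-one element `α ∈ R` is an algebraic integer of `L`,
and at a ramified place `ι j` (`j ≥ d`) the norm form is positive definite, so `|ι j τ| ≤ 2`.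
If two trace vectors `t ≠ t'` in the box come from `τ, τ'`, then `τ - τ'` is a nonzero algebraic
integer, so `1 ≤ |N(τ - τ')| = ∏ j, |ι j (τ - τ')|`. Bounding every factor except the first one by
`2 T j` (for `j < d`) or by `4` (for `j ≥ d`) shows that the first coordinates of distinct points
are at least `2 T 0 / (2 ^ (2n - d) ∏ T)` apart, and an interval of length `2 T 0` contains at most
`1 + 2 ^ (2n - d) ∏ T` such points.
-/

lemma abs_map_two_mul_re_le_two {L : Type*} [CommRing L] {c₁ c₂ : L} (φ : L →+* ℝ)
    (h₁ : φ c₁ < 0) (h₂ : φ c₂ < 0) {α : ℍ[L, c₁, c₂]} (hα : α * star α = 1) :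
    |φ (2 * α.re)| ≤ 2 := by
  have hnorm : α.re ^ 2 - c₁ * α.imI ^ 2 - c₂ * α.imJ ^ 2 + c₁ * c₂ * α.imK ^ 2 = 1 := by
    have := congr_arg QuaternionAlgebra.re hα
    simp only [QuaternionAlgebra.re_mul, QuaternionAlgebra.imI_star, QuaternionAlgebra.imJ_star,
      QuaternionAlgebra.imK_star, QuaternionAlgebra.re_star, QuaternionAlgebra.re_one] at this
    linear_combination this
  replace hnorm := congr_arg φ hnorm
  simp only [map_add, map_sub, map_mul, map_pow, map_one] at hnorm
  have hre : |φ α.re| ≤ 1 := abs_le_one_iff_mul_self_le_one.mpr <| by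
    nlinarith [sq_nonneg (φ α.imI), sq_nonneg (φ α.imJ), sq_nonneg (φ α.imK),
      mul_pos_of_neg_of_neg h₁ h₂]
  rw [map_mul, map_ofNat, abs_mul, abs_two]
  linarith

lemma Fin.prod_dite_val_lt {M : Type*} [CommMonoid M] {d n : ℕ} (hdn : d ≤ n) (f : Fin d → M)
    (c : M) :
    ∏ j : Fin n, (if h : (j : ℕ) < d then f ⟨j, h⟩ else c) = (∏ i, f i) * c ^ (n - d) := by
  obtain ⟨m, rfl⟩ := Nat.exists_eq_add_of_le hdn
  simp [Fin.prod_univ_add]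

lemma div_prod_le_abs_of_one_le_prod_abs {ι : Type*} [Fintype ι] [DecidableEq ι] {v B : ι → ℝ}
    (i₀ : ι) (hv : 1 ≤ ∏ i, |v i|) (hB : ∀ i ≠ i₀, |v i| ≤ B i) (hB₀ : 0 < B i₀) :
    B i₀ / ∏ i, B i ≤ |v i₀| := by
  have hvB : 1 ≤ |v i₀| * ∏ i ∈ Finset.univ.erase i₀, B i :=
    calc 1 ≤ ∏ i, |v i| := hv
      _ = |v i₀| * ∏ i ∈ Finset.univ.erase i₀, |v i| :=
        (Finset.mul_prod_erase _ _ (Finset.mem_univ _)).symm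
      _ ≤ |v i₀| * ∏ i ∈ Finset.univ.erase i₀, B i := by
        gcongr with i hi
        exact hB i (Finset.ne_of_mem_erase hi)
  have hP : 0 < ∏ i ∈ Finset.univ.erase i₀, B i := by
    refine lt_of_le_of_ne (Finset.prod_nonneg fun i hi => ?_) fun h => ?_
    · exact (abs_nonneg _).trans (hB i (Finset.ne_of_mem_erase hi))
    · rw [← h, mul_zero] at hvB; linarith
  rwa [← Finset.mul_prod_erase _ _ (Finset.mem_univ i₀), div_mul_cancel_left₀ hB₀.ne',
    inv_le_iff_one_le_mul₀ hP]

lemma abs_norm_eq_prod_abs_embeddings {L : Type*} [Field L] [NumberField L] {n : ℕ}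
    (hn : Module.finrank ℚ L = n) {ι : Fin n → (L →+* ℝ)} (hι : Function.Injective ι) (u : L) :
    |(Algebra.norm ℚ u : ℝ)| = ∏ j, |ι j u| := by
  let σ : Fin n → (L →ₐ[ℚ] ℂ) := fun j => (Complex.ofRealHom.comp (ι j)).toRatAlgHom
  have hσ : Function.Bijective σ := by
    refine (Fintype.bijective_iff_injective_and_card σ).mpr ⟨fun a b hab => hι ?_, ?_⟩
    · ext z
      exact Complex.ofReal_injective (DFunLike.congr_fun hab z)
    · rw [AlgHom.card, hn, Fintype.card_fin]
  have hnorm : (Algebra.norm ℚ u : ℂ) = ∏ j, σ j u := by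
    rw [← eq_ratCast (algebraMap ℚ ℂ), Algebra.norm_eq_prod_embeddings]
    exact ((Equiv.ofBijective σ hσ).prod_comp fun τ => τ u).symm
  rw [← Real.norm_eq_abs, ← Complex.norm_real, Complex.ofReal_ratCast, hnorm, norm_prod]
  simp [σ]

lemma one_le_abs_norm_of_isIntegral {L : Type*} [Field L] [NumberField L] {u : L}
    (hu : u ≠ 0) (hint : IsIntegral ℤ u) : 1 ≤ |(Algebra.norm ℚ u : ℝ)| := by
  obtain ⟨m, hm⟩ := IsIntegrallyClosed.isIntegral_iff.mp (Algebra.isIntegral_norm ℚ hint)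
  have hm0 : m ≠ 0 := by
    rintro rfl
    exact hu (by simpa using hm.symm)
  rw [← hm, algebraMap_int_eq, eq_intCast, Rat.cast_intCast, ← Int.cast_abs]
  exact_mod_cast Int.one_le_abs hm0

lemma div_prod_le_abs_of_isIntegral {L : Type*} [Field L] [NumberField L] {n : ℕ}
    (hn : Module.finrank ℚ L = n) {ι : Fin n → (L →+* ℝ)} (hι : Function.Injective ι) {u : L}
    (hu : u ≠ 0) (hint : IsIntegral ℤ u) {B : Fin n → ℝ} (hB : ∀ j, |ι j u| ≤ B j) (i₀ : Fin n)
    (hB₀ : 0 < B i₀) : B i₀ / ∏ j, B j ≤ |ι i₀ u| := by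
  have hnorm := one_le_abs_norm_of_isIntegral hu hint
  rw [abs_norm_eq_prod_abs_embeddings hn hι] at hnorm
  exact div_prod_le_abs_of_one_le_prod_abs i₀ hnorm (fun j _ => hB j) hB₀

lemma card_le_one_add_div_of_separated {α : Type*} (S : Finset α) (f : α → ℝ) {a ℓ δ : ℝ}
    (hℓ : 0 ≤ ℓ) (hδ : 0 < δ) (hmem : ∀ s ∈ S, f s ∈ Set.Icc a (a + ℓ))
    (hsep : ∀ s ∈ S, ∀ s' ∈ S, s ≠ s' → δ ≤ |f s - f s'|) :
    (S.card : ℝ) ≤ 1 + ℓ / δ := by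
  set bin : α → ℤ := fun s => ⌊(f s - a) / δ⌋
  have hmaps : Set.MapsTo bin S (Finset.Icc 0 ⌊ℓ / δ⌋) := by
    intro s hs
    obtain ⟨hlo, hhi⟩ := hmem s hs
    simp only [Finset.coe_Icc, Set.mem_Icc, bin]
    exact ⟨Int.floor_nonneg.mpr (div_nonneg (by linarith) hδ.le),
      Int.floor_le_floor (div_le_div_of_nonneg_right (by linarith) hδ.le)⟩
  have hinj : Set.InjOn bin S := by
    intro s hs s' hs' hbin
    by_contra hne
    have := Int.abs_sub_lt_one_of_floor_eq_floor hbin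
    rw [← sub_div, sub_sub_sub_cancel_right, abs_div, abs_of_pos hδ, div_lt_one hδ] at this
    exact (hsep s hs s' hs' hne).not_gt this
  have hcard : (S.card : ℤ) ≤ ⌊ℓ / δ⌋ + 1 := by
    have := Finset.card_le_card_of_injOn bin hmaps hinj
    rw [Int.card_Icc, sub_zero] at this
    have : 0 ≤ ⌊ℓ / δ⌋ + 1 := by positivity
    omega
  calc (S.card : ℝ) ≤ ⌊ℓ / δ⌋ + 1 := by exact_mod_cast hcard
    _ ≤ 1 + ℓ / δ := by linarith [Int.floor_le (ℓ / δ)]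

theorem card_le_one_add_pow_mul_prod_of_isIntegral {L : Type*} [Field L] [NumberField L]
    {n d : ℕ} (hd : 0 < d) (hdn : d ≤ n) (hn : Module.finrank ℚ L = n) {ι : Fin n → (L →+* ℝ)}
    (hι : Function.Injective ι) (x T : Fin d → ℝ) (hT : ∀ j, 0 < T j) (S : Finset (Fin d → ℝ))
    (hS : ∀ t ∈ S, (∃ τ : L, IsIntegral ℤ τ ∧ (∀ j : Fin n, d ≤ (j : ℕ) → |ι j τ| ≤ 2) ∧
        ∀ j : Fin d, t j = ι (Fin.castLE hdn j) τ) ∧ ∀ j : Fin d, |t j - x j| ≤ T j) :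
    (S.card : ℝ) ≤ 1 + 2 ^ (2 * n - d) * ∏ j, T j := by
  choose! τ hτint hτram hτt using fun t ht => (hS t ht).1
  set j₀ : Fin d := ⟨0, hd⟩
  have hT₀ : 0 < 2 * T j₀ := by linarith [hT j₀]
  set B : Fin n → ℝ := fun j => if h : (j : ℕ) < d then 2 * T ⟨j, h⟩ else 4
  have hB : ∀ i, B (Fin.castLE hdn i) = 2 * T i := fun i => dif_pos i.isLt
  have hprodB : ∏ j, B j = 2 ^ (2 * n - d) * ∏ j, T j := by
    rw [show ∏ j, B j = (∏ i, 2 * T i) * 4 ^ (n - d) from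
        Fin.prod_dite_val_lt hdn (fun i => 2 * T i) (4 : ℝ),
      Finset.prod_mul_distrib, Finset.prod_const, Finset.card_univ, Fintype.card_fin,
      show (4 : ℝ) = 2 ^ 2 by norm_num, ← pow_mul, mul_right_comm, ← pow_add]
    congr 2
    omega
  have hprodB_pos : 0 < ∏ j, B j := by
    rw [hprodB]
    exact mul_pos (by positivity) (Finset.prod_pos fun j _ => hT j)
  have hbound : ∀ t ∈ S, ∀ t' ∈ S, ∀ j, |ι j (τ t - τ t')| ≤ B j := by
    intro t ht t' ht' j
    by_cases h : (j : ℕ) < d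
    · obtain ⟨i, rfl⟩ : ∃ i, Fin.castLE hdn i = j := ⟨⟨j, h⟩, rfl⟩
      rw [hB, map_sub, ← hτt t ht, ← hτt t' ht']
      exact (abs_sub_le _ (x i) _).trans <| by
        rw [abs_sub_comm (x i)]
        linarith [(hS t ht).2 i, (hS t' ht').2 i]
    · rw [show B j = 4 from dif_neg h, map_sub]
      linarith [abs_sub (ι j (τ t)) (ι j (τ t')), hτram t ht j (not_lt.mp h),
        hτram t' ht' j (not_lt.mp h)]
  have hsep : ∀ t ∈ S, ∀ t' ∈ S, t ≠ t' → 2 * T j₀ / ∏ j, B j ≤ |t j₀ - t' j₀| := by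
    intro t ht t' ht' hne
    have hu : τ t - τ t' ≠ 0 := fun h => hne <| funext fun j => by
      rw [hτt t ht, hτt t' ht', sub_eq_zero.mp h]
    have := div_prod_le_abs_of_isIntegral hn hι hu ((hτint t ht).sub (hτint t' ht'))
      (hbound t ht t' ht') (Fin.castLE hdn j₀) (by rwa [hB])
    rwa [hB, map_sub, ← hτt t ht, ← hτt t' ht'] at this
  have hmem : ∀ t ∈ S, t j₀ ∈ Set.Icc (x j₀ - T j₀) (x j₀ - T j₀ + 2 * T j₀) := by
    intro t ht
    have := abs_le.mp ((hS t ht).2 j₀)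
    constructor <;> linarith
  calc (S.card : ℝ) ≤ 1 + 2 * T j₀ / (2 * T j₀ / ∏ j, B j) :=
        card_le_one_add_div_of_separated S (· j₀) hT₀.le (div_pos hT₀ hprodB_pos) hmem hsep
    _ = 1 + 2 ^ (2 * n - d) * ∏ j, T j := by rw [div_div_cancel₀ hT₀.ne', hprodB]

theorem stmt_19_general {L : Type*} [Field L] [NumberField L]
    (n d : ℕ) (hd : 0 < d) (hdn : d ≤ n)
    (hn : Module.finrank ℚ L = n)
    (ι : Fin n → (L →+* ℝ)) (hι : Function.Injective ι)
    (c₁ c₂ : L)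
    (hram : ∀ j : Fin n, d ≤ (j : ℕ) → ι j c₁ < 0 ∧ ι j c₂ < 0)
    (R : Subring ℍ[L, c₁, c₂])
    (hRtr : ∀ β ∈ R, IsIntegral ℤ ((β + star β).re))
    (x T : Fin d → ℝ) (hT : ∀ j, 0 < T j)
    (S : Finset (Fin d → ℝ))
    (hS : ∀ t ∈ S, (∃ α ∈ R, α * star α = 1 ∧
        ∀ j : Fin d, t j = ι (Fin.castLE hdn j) (2 * α.re)) ∧
      ∀ j : Fin d, |t j - x j| ≤ T j) :
    (S.card : ℝ) ≤ 1 + 2 ^ (2 * n - d) * ∏ j, T j := by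
  refine card_le_one_add_pow_mul_prod_of_isIntegral hd hdn hn hι x T hT S fun t ht => ?_
  obtain ⟨⟨α, hαR, hα, htα⟩, hbox⟩ := hS t ht
  have htrace : (α + star α).re = 2 * α.re := by simp [two_mul]
  exact ⟨⟨2 * α.re, htrace ▸ hRtr α hαR,
    fun j hj => abs_map_two_mul_re_le_two (ι j) (hram j hj).1 (hram j hj).2 hα, htα⟩, hbox⟩

/-- Let `Γ` be the irreducible cocompact lattice in `PSL(2,ℝ)^d` derived from
a maximal order `R` in a quaternion algebra `A = ℍ[L, c₁, c₂]` over a totally real field `L` of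
degree `n ≥ d` (with real embeddings `ι 0, …, ι (n-1)`, and ramified at all the real places
`ι j` with `j ≥ d`, i.e. `ι j c₁ < 0` and `ι j c₂ < 0` there).  The trace set of `Γ` is
`Tr(Γ) = {(ι_1(Trd α), …, ι_d(Trd α)) : α ∈ R, Nrd α = 1} ⊆ ℝ^d`, where `Trd α = 2 α.re`.
Then for any `x ∈ ℝ^d` and `T_1, …, T_d > 0`,
`#{t ∈ Tr(Γ) : |t_j - x_j| ≤ T_j ∀j} ≤ 1 + 2^{2n-d} T_1 ⋯ T_d`. -/
theorem stmt_19 {L : Type*} [Field L] [NumberField L]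
    (n d : ℕ) (hd : 0 < d) (hdn : d ≤ n)
    (hn : Module.finrank ℚ L = n)
    (ι : Fin n → (L →+* ℝ)) (hι : Function.Injective ι)
    (c₁ c₂ : L) (hc₁ : c₁ ≠ 0) (hc₂ : c₂ ≠ 0)
    (hram : ∀ j : Fin n, d ≤ (j : ℕ) → ι j c₁ < 0 ∧ ι j c₂ < 0)
    (R : Subring ℍ[L, c₁, c₂])
    (hRL : ∀ x : L, IsIntegral ℤ x → (algebraMap L ℍ[L, c₁, c₂] x) ∈ R)
    (hRtr : ∀ β ∈ R, IsIntegral ℤ ((β + star β).re))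
    (hRnr : ∀ β ∈ R, IsIntegral ℤ ((β * star β).re))
    (x T : Fin d → ℝ) (hT : ∀ j, 0 < T j)
    (S : Finset (Fin d → ℝ))
    (hS : ∀ t ∈ S, (∃ α ∈ R, α * star α = 1 ∧
        ∀ j : Fin d, t j = ι (Fin.castLE hdn j) (2 * α.re)) ∧
      ∀ j : Fin d, |t j - x j| ≤ T j) :
    (S.card : ℝ) ≤ 1 + 2 ^ (2 * n - d) * ∏ j, T j :=
  stmt_19_general n d hd hdn hn ι hι c₁ c₂ hram R hRtr x T hT S hS
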